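/- (Deterministic form of Lemma 2.8, null case.) For every fixed h ≥ 0, k > 0, β > 0 and r ≥ 1: lim_{n→∞} n^{k/2+r} · BF₁₀(h | βn, r) = β^{−(k/2+r)} · ₁F₁(k/2+r, k/2; h/2). In particular, BF₁₀(h|βn,r) = O(n^{−(k/2+r)}) as n → ∞. -/

import Mathlib

open Real MeasureTheory Filter Asymptotics

/-- Rising factorial (Pochhammer symbol) `(a)_k`. -/
noncomputable def risingFac (a : ℝ) (k : ℕ) : ℝ := (ascPochhammer ℝ k).eval a

/-- Confluent hypergeometric function `₁F₁(a, b; x)`. -/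
noncomputable def oneF1 (a b x : ℝ) : ℝ :=
  ∑' k : ℕ, (risingFac a k / risingFac b k) * x ^ k / (Nat.factorial k : ℝ)

/-- Chi-squared Bayes factor `BF₁₀(h | τ², r)` with `k` degrees of freedom,
as a function of `τ² = τsq`. -/
noncomputable def BF10chiSq (h τsq r k : ℝ) : ℝ :=
  (1 + τsq) ^ (-(k / 2 + r)) *
    oneF1 (k / 2 + r) (k / 2) (τsq * h / (2 * (1 + τsq)))

lemma risingFac_pos {a : ℝ} (ha : 0 < a) (n : ℕ) : 0 < risingFac a n := by
  induction n with
  | zero => simp [risingFac]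
  | succ m ih =>
    rw [risingFac, ascPochhammer_succ_eval]
    exact mul_pos ih (by positivity)

lemma risingFac_div_le {a b : ℝ} (hb : 0 < b) (hab : b ≤ a) (n : ℕ) :
    risingFac a n / risingFac b n ≤ (a / b) ^ n := by
  induction n with
  | zero => simp [risingFac]
  | succ m ih =>
    have ha : 0 < a := lt_of_lt_of_le hb hab
    rw [risingFac, risingFac, ascPochhammer_succ_eval, ascPochhammer_succ_eval, pow_succ]
    rw [← risingFac, ← risingFac, mul_div_mul_comm]
    have h2 : (a + m) / (b + m) ≤ a / b := by
      rw [div_le_div_iff₀ (by positivity) hb]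
      nlinarith [Nat.cast_nonneg (α := ℝ) m]
    exact mul_le_mul ih h2 (by positivity) (by positivity)

/-- Deterministic form of Lemma 2.8, null case. -/
theorem lemma28_null (h k β r : ℝ) (hh : 0 ≤ h) (hk : 0 < k) (hβ : 0 < β) (hr : 1 ≤ r) :
    Tendsto (fun n : ℕ => (n : ℝ) ^ (k / 2 + r) * BF10chiSq h (β * n) r k) atTop
      (nhds (β ^ (-(k / 2 + r)) * oneF1 (k / 2 + r) (k / 2) (h / 2))) ∧
    (fun n : ℕ => BF10chiSq h (β * n) r k) =O[atTop]
      fun n : ℕ => (n : ℝ) ^ (-(k / 2 + r)) := by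
  set s : ℝ := k / 2 + r with hs
  set b : ℝ := k / 2 with hbdef
  have hb : 0 < b := by positivity
  have hbs : b ≤ s := by simp [hs, hbdef]; linarith
  have hspos : 0 < s := lt_of_lt_of_le hb hbs
  set x : ℕ → ℝ := fun n => (β * n) * h / (2 * (1 + β * n)) with hx
  have hden : ∀ n : ℕ, (0:ℝ) < 1 + β * n := fun n => by positivity
  -- x n ∈ [0, h/2]
  have hx0 : ∀ n, 0 ≤ x n := fun n => by
    have := hden n; positivity
  have hxle : ∀ n, x n ≤ h / 2 := fun n => by
    rw [hx, div_le_div_iff₀ (by have := hden n; linarith) two_pos]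
    have : (0:ℝ) ≤ β * n := by positivity
    nlinarith
  -- (1 + β n)⁻¹ → 0
  have hu : Tendsto (fun n : ℕ => (1 + β * n)⁻¹) atTop (nhds 0) := by
    apply tendsto_inv_atTop_zero.comp
    exact tendsto_atTop_add_const_left _ 1
      ((tendsto_natCast_atTop_atTop).const_mul_atTop hβ)
  -- x n → h/2
  have hxlim : Tendsto x atTop (nhds (h / 2)) := by
    have : ∀ n, x n = h / 2 * (1 - (1 + β * n)⁻¹) := by
      intro n
      have := (hden n).ne'
      simp only [hx]
      field_simp
      ring
    rw [funext this]
    have : Tendsto (fun n : ℕ => 1 - (1 + β * n)⁻¹) atTop (nhds 1) := by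
      simpa using (tendsto_const_nhds (x := (1:ℝ))).sub hu
    simpa using this.const_mul (h / 2)
  -- dominated convergence for oneF1
  have hclim : Tendsto (fun n => oneF1 s b (x n)) atTop (nhds (oneF1 s b (h / 2))) := by
    unfold oneF1
    apply tendsto_tsum_of_dominated_convergence
      (bound := fun j : ℕ => (s * h / (2 * b)) ^ j / (Nat.factorial j : ℝ))
    · exact Real.summable_pow_div_factorial _
    · intro j
      exact (((hxlim.pow j).const_mul _).div_const _)
    · filter_upwards with n
      intro j
      have hc0 : 0 < risingFac s j / risingFac b j :=
        div_pos (risingFac_pos hspos j) (risingFac_pos hb j)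
      rw [Real.norm_eq_abs, abs_of_nonneg (by positivity)]
      have h1 : risingFac s j / risingFac b j * x n ^ j ≤ (s / b) ^ j * (h / 2) ^ j :=
        mul_le_mul (risingFac_div_le hb hbs j)
          (pow_le_pow_left₀ (hx0 n) (hxle n) j) (by positivity) (by positivity)
      have h2 : (s / b) ^ j * (h / 2) ^ j = (s * h / (2 * b)) ^ j := by
        rw [← mul_pow]; ring_nf
      calc risingFac s j / risingFac b j * x n ^ j / (Nat.factorial j : ℝ)
          ≤ (s / b) ^ j * (h / 2) ^ j / (Nat.factorial j : ℝ) := by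
            apply div_le_div_of_nonneg_right h1 (by positivity) |>.trans_eq rfl
        _ = (s * h / (2 * b)) ^ j / (Nat.factorial j : ℝ) := by rw [h2]
  -- prefactor limit
  have hA : Tendsto (fun n : ℕ => (n : ℝ) ^ s * (1 + β * n) ^ (-s)) atTop
      (nhds (β ^ (-s))) := by
    have heq : ∀ n : ℕ, (n : ℝ) ^ s * (1 + β * n) ^ (-s)
        = ((β⁻¹) * (1 - (1 + β * n)⁻¹)) ^ s := by
      intro n
      have hd := hden n
      have : (β⁻¹) * (1 - (1 + β * n)⁻¹) = (n : ℝ) * (1 + β * n)⁻¹ := by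
        field_simp
        ring
      rw [this, Real.mul_rpow (Nat.cast_nonneg n) (by positivity),
        Real.inv_rpow hd.le, ← Real.rpow_neg hd.le]
    simp_rw [heq]
    have hβinv : Tendsto (fun n : ℕ => (β⁻¹) * (1 - (1 + β * n)⁻¹)) atTop (nhds β⁻¹) := by
      have : Tendsto (fun n : ℕ => 1 - (1 + β * n)⁻¹) atTop (nhds 1) := by
        simpa using (tendsto_const_nhds (x := (1:ℝ))).sub hu
      simpa using this.const_mul β⁻¹
    have := hβinv.rpow_const (p := s) (Or.inl (by positivity))
    rwa [Real.inv_rpow hβ.le, ← Real.rpow_neg hβ.le] at this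
  -- part 1
  have part1 : Tendsto (fun n : ℕ => (n : ℝ) ^ s * BF10chiSq h (β * n) r k) atTop
      (nhds (β ^ (-s) * oneF1 s b (h / 2))) := by
    have heq : ∀ n : ℕ, (n : ℝ) ^ s * BF10chiSq h (β * n) r k
        = ((n : ℝ) ^ s * (1 + β * n) ^ (-s)) * oneF1 s b (x n) := by
      intro n; unfold BF10chiSq; rw [hx]; ring
    simp_rw [heq]
    exact hA.mul hclim
  refine ⟨part1, ?_⟩
  -- part 2
  have hg : (fun n : ℕ => (n : ℝ) ^ s * BF10chiSq h (β * n) r k) =O[atTop] (fun _ => (1:ℝ)) :=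
    part1.isBigO_one ℝ
  have := (isBigO_refl (fun n : ℕ => (n : ℝ) ^ (-s)) atTop).mul hg
  refine (this.congr' ?_ ?_)
  · filter_upwards [eventually_ge_atTop 1] with n hn
    have hn0 : (0:ℝ) < n := by exact_mod_cast hn
    rw [← mul_assoc, Real.rpow_neg hn0.le, inv_mul_cancel₀ (by positivity), one_mul]
  · filter_upwards with n; rw [mul_one]
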